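/- Let ᾱ = √(2-α²) with 1 ≤ α ≤ √2. The determinant of the 8×8 generator matrix M_{E₈^α} of the deformed E₈ lattice satisfies |det M_{E₈^α}| = (1/2)(ᾱ²(α-ᾱ)(α⁴+α²ᾱ²+ᾱ⁴) + α⁶(α+ᾱ)). -/

import Mathlib

/-!
Expanding along the first row shows that a matrix with first column `c` and, in column `k + 1`,
entries `x` in row `k` and `y` in row `k + 1` has determinant `∑ i, (-1)^i c_i x^i y^(n-i)`:
the first minor is upper triangular with diagonal `y`, the second is a matrix of the same shape
one size smaller. For `M_{E₈^α}` this sum is `-(1/2)(ᾱ²(α-ᾱ)(α⁴+α²ᾱ²+ᾱ⁴) + α⁶(α+ᾱ))`, and the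
bracket is nonnegative since `0 ≤ ᾱ ≤ α` when `α ≥ 1`.
-/

/-- Generator matrix of the deformed `E₈` lattice: first column `(1,1,1,1,1,1,-1,1)ᵀ/2`,
and for `j ≥ 2`, column `j` has entry `α` in row `j-1` and `ᾱ` in row `j`. -/
noncomputable def E8AlphaMatrix (α ᾱ : ℝ) : Matrix (Fin 8) (Fin 8) ℝ :=
  (1 / 2 : ℝ) • !![1, 2*α, 0, 0, 0, 0, 0, 0;
                   1, 2*ᾱ, 2*α, 0, 0, 0, 0, 0;
                   1, 0, 2*ᾱ, 2*α, 0, 0, 0, 0;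
                   1, 0, 0, 2*ᾱ, 2*α, 0, 0, 0;
                   1, 0, 0, 0, 2*ᾱ, 2*α, 0, 0;
                   1, 0, 0, 0, 0, 2*ᾱ, 2*α, 0;
                   -1, 0, 0, 0, 0, 0, 2*ᾱ, 2*α;
                   1, 0, 0, 0, 0, 0, 0, 2*ᾱ]

namespace Matrix

variable {R : Type*} [CommRing R]

def firstColBidiagonal {n : ℕ} (c : Fin (n + 1) → R) (x y : R) :
    Matrix (Fin (n + 1)) (Fin (n + 1)) R :=
  of fun i j => Fin.cases (c i)
    (fun k => if i = k.castSucc then x else if i = k.succ then y else 0) j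

section Minors

variable {n : ℕ} (c : Fin (n + 2) → R) (x y : R)

theorem det_firstColBidiagonal_submatrix_succ_succ :
    ((firstColBidiagonal c x y).submatrix Fin.succ Fin.succ).det = y ^ (n + 1) := by
  rw [det_of_isUpperTriangular]
  · simp [firstColBidiagonal, Fin.ext_iff]
  · intro i j hij
    have : (j : ℕ) < i := hij
    simp only [submatrix_apply, firstColBidiagonal, of_apply, Fin.cases_succ, Fin.ext_iff,
      Fin.val_succ, Fin.val_castSucc]
    rw [if_neg (by omega), if_neg (by omega)]

theorem firstColBidiagonal_submatrix_succ_succAbove_one :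
    (firstColBidiagonal c x y).submatrix Fin.succ (Fin.succAbove 1) =
      firstColBidiagonal (c ∘ Fin.succ) x y := by
  ext i j
  cases j using Fin.cases with
  | zero => rfl
  | succ k => simp [firstColBidiagonal, Fin.succAbove, Fin.lt_def, Fin.ext_iff]

end Minors

theorem det_firstColBidiagonal {n : ℕ} (c : Fin (n + 1) → R) (x y : R) :
    (firstColBidiagonal c x y).det =
      ∑ i : Fin (n + 1), (-1) ^ (i : ℕ) * c i * x ^ (i : ℕ) * y ^ (n - i) := by
  induction n with
  | zero => simp [firstColBidiagonal]
  | succ n ih =>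
    have hrow : ∀ j : Fin n, firstColBidiagonal c x y 0 j.succ.succ = 0 := by
      intro j
      simp only [firstColBidiagonal, of_apply, Fin.cases_succ]
      rw [if_neg (by simp [Fin.ext_iff]), if_neg (by simp [Fin.ext_iff])]
    have h01 : firstColBidiagonal c x y 0 1 = x := by
      rw [← Fin.succ_zero_eq_one]
      simp only [firstColBidiagonal, of_apply, Fin.cases_succ, Fin.castSucc_zero, if_pos]
    rw [det_succ_row_zero, Fin.sum_univ_succ, Fin.sum_univ_succ, Fin.succAbove_zero,
      Fin.succ_zero_eq_one, det_firstColBidiagonal_submatrix_succ_succ, Fin.sum_univ_succ,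
      firstColBidiagonal_submatrix_succ_succAbove_one, ih, h01]
    simp only [hrow, mul_zero, zero_mul, Finset.sum_const_zero, add_zero, Finset.mul_sum]
    refine congrArg₂ (· + ·) (by simp [firstColBidiagonal]) (Finset.sum_congr rfl fun i _ => ?_)
    simp only [Function.comp_apply, Fin.val_succ, Fin.val_one, Nat.reduceSubDiff]
    ring

end Matrix

open Matrix in
theorem E8AlphaMatrix_eq_smul_firstColBidiagonal (α ᾱ : ℝ) :
    E8AlphaMatrix α ᾱ =
      (1 / 2 : ℝ) • firstColBidiagonal ![1, 1, 1, 1, 1, 1, -1, 1] (2 * α) (2 * ᾱ) := by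
  rw [E8AlphaMatrix]
  congr 1
  ext i j
  fin_cases i <;> fin_cases j <;> rfl

theorem det_E8AlphaMatrix (α ᾱ : ℝ) :
    (E8AlphaMatrix α ᾱ).det =
      -((1 / 2) * (ᾱ ^ 2 * (α - ᾱ) * (α ^ 4 + α ^ 2 * ᾱ ^ 2 + ᾱ ^ 4) + α ^ 6 * (α + ᾱ))) := by
  rw [E8AlphaMatrix_eq_smul_firstColBidiagonal, Matrix.det_smul, Matrix.det_firstColBidiagonal]
  simp only [one_div, Fintype.card_fin, inv_pow, Nat.succ_eq_add_one, Nat.reduceAdd, zero_add,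
    Fin.sum_univ_eight, Fin.isValue, Fin.coe_ofNat_eq_mod, Nat.zero_mod, pow_zero,
    Matrix.cons_val_zero, mul_one, tsub_zero, one_mul, Nat.one_mod, pow_one, Matrix.cons_val_one,
    neg_mul, Nat.add_one_sub_one, Nat.reduceMod, even_two, Even.neg_pow, one_pow, Matrix.cons_val,
    Nat.reduceSub, mul_neg, Nat.mod_succ, tsub_self]
  ring

theorem stmt_16 (α ᾱ : ℝ) (hα : 1 ≤ α)
    (hᾱ : ᾱ = Real.sqrt (2 - α ^ 2)) :
    |(E8AlphaMatrix α ᾱ).det| =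
      (1 / 2) * (ᾱ ^ 2 * (α - ᾱ) * (α ^ 4 + α ^ 2 * ᾱ ^ 2 + ᾱ ^ 4) + α ^ 6 * (α + ᾱ)) := by
  have hᾱ_nonneg : 0 ≤ ᾱ := hᾱ ▸ Real.sqrt_nonneg _
  have hᾱ_le : ᾱ ≤ α := hᾱ ▸ Real.sqrt_le_iff.2 ⟨by linarith, by nlinarith⟩
  have hsub : 0 ≤ α - ᾱ := sub_nonneg.2 hᾱ_le
  rw [det_E8AlphaMatrix, abs_neg, abs_of_nonneg (by positivity)]
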